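/- arXiv:2502.03113 — 2 statements merged into one kernel-verified Lean document; each statement's English description precedes it below -/
import Mathlib

section
/- For every real r with 0 < r ≤ 1 there exists a scheduling game with rank-based utilities G on two machines with speeds 1 and r that admits a pure Nash equilibrium and such that: if r ≤ (√5 − 1)/2, every pure Nash equilibrium s of G satisfies C_max(s) ≥ (r + 1)·OPT(G), and if r > (√5 − 1)/2, every pure Nash equilibrium s of G satisfies C_max(s) ≥ ((r + 2)/(r + 1))·OPT(G). In particular, the price of stability of rank-based scheduling games on two related machines with speed ratio r is at least r + 1 when r ≤ (√5 − 1)/2 and at least (r + 2)/(r + 1) when r > (√5 − 1)/2. -/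
open Finset
open scoped Classical

noncomputable section

variable {J M : Type*} [Fintype J]

/-- Completion time of job `j` in profile `s`: the total processing time of the jobs on
`j`'s machine that do not come after `j` in that machine's priority list, divided by the speed. -/
def Ctime (p : J → ℝ) (r : M → ℝ) (π : M → J → ℕ) (s : J → M) (j : J) : ℝ :=
  (∑ j' ∈ univ.filter (fun j' => s j' = s j ∧ π (s j) j' ≤ π (s j) j), p j') / r (s j)

/-- Rank of job `j` in profile `s`. -/
def rankOf (p : J → ℝ) (r : M → ℝ) (π : M → J → ℕ) (s : J → M) (j : J) : ℝ :=
  ((univ.filter (fun j' => Ctime p r π s j' < Ctime p r π s j)).card : ℝ) +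
    (((univ.filter (fun j' => Ctime p r π s j' = Ctime p r π s j)).card : ℝ) + 1) / 2

/-- The unilateral deviation of job `j` to machine `i` is beneficial. -/
def Beneficial (p : J → ℝ) (r : M → ℝ) (π : M → J → ℕ) (s : J → M) (j : J) (i : M) : Prop :=
  rankOf p r π (Function.update s j i) j < rankOf p r π s j ∨
    (rankOf p r π (Function.update s j i) j = rankOf p r π s j ∧
      Ctime p r π (Function.update s j i) j < Ctime p r π s j)

/-- Pure Nash equilibrium: no job has a beneficial deviation. -/
def IsNE (p : J → ℝ) (r : M → ℝ) (π : M → J → ℕ) (s : J → M) : Prop :=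
  ∀ j i, ¬ Beneficial p r π s j i

/-- Makespan of profile `s`. -/
def Cmax (p : J → ℝ) (r : M → ℝ) (π : M → J → ℕ) (s : J → M) : ℝ :=
  ⨆ j, Ctime p r π s j

lemma card_split (p : J → ℝ) (r : M → ℝ) (π : M → J → ℕ) (s : J → M) (j : J) :
    (univ.filter (fun j' => Ctime p r π s j' ≤ Ctime p r π s j)).card =
    (univ.filter (fun j' => Ctime p r π s j' < Ctime p r π s j)).card +
    (univ.filter (fun j' => Ctime p r π s j' = Ctime p r π s j)).card := by
  rw [← Finset.card_union_of_disjoint]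
  · congr 1
    ext a
    simp [Finset.mem_filter, le_iff_lt_or_eq]
  · rw [Finset.disjoint_left]
    intro a ha hb
    simp only [Finset.mem_filter] at ha hb
    exact absurd hb.2 (ne_of_lt ha.2)

lemma one_le_eqcard (p : J → ℝ) (r : M → ℝ) (π : M → J → ℕ) (s : J → M) (j : J) :
    1 ≤ (univ.filter (fun j' => Ctime p r π s j' = Ctime p r π s j)).card :=
  Finset.card_pos.mpr ⟨j, by simp⟩

lemma rank_le_of (p : J → ℝ) (r : M → ℝ) (π : M → J → ℕ) (s : J → M) (j : J) (m : ℕ)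
    (h : (univ.filter (fun j' => Ctime p r π s j' ≤ Ctime p r π s j)).card ≤ m) :
    rankOf p r π s j ≤ m := by
  have hs := card_split p r π s j
  have h1 := one_le_eqcard p r π s j
  rw [rankOf]
  have hA : ((univ.filter (fun j' => Ctime p r π s j' < Ctime p r π s j)).card : ℝ) +
      ((univ.filter (fun j' => Ctime p r π s j' = Ctime p r π s j)).card : ℝ) ≤ m := by
    exact_mod_cast hs ▸ h
  have h1' : (1:ℝ) ≤ ((univ.filter (fun j' => Ctime p r π s j' = Ctime p r π s j)).card : ℝ) := by
    exact_mod_cast h1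
  linarith

lemma le_rank_of (p : J → ℝ) (r : M → ℝ) (π : M → J → ℕ) (s : J → M) (j : J) (a b : ℕ)
    (ha : a ≤ (univ.filter (fun j' => Ctime p r π s j' < Ctime p r π s j)).card)
    (hb : b ≤ (univ.filter (fun j' => Ctime p r π s j' = Ctime p r π s j)).card) :
    (a : ℝ) + ((b : ℝ) + 1) / 2 ≤ rankOf p r π s j := by
  rw [rankOf]
  have ha' : (a:ℝ) ≤ _ := Nat.cast_le.mpr ha
  have hb' : (b:ℝ) ≤ _ := Nat.cast_le.mpr hb
  linarith

lemma le_rank_of' (p : J → ℝ) (r : M → ℝ) (π : M → J → ℕ) (s : J → M) (j : J) (k : ℕ)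
    (hk : k ≤ (univ.filter (fun j' => Ctime p r π s j' ≤ Ctime p r π s j)).card) :
    ((k : ℝ) + 1) / 2 ≤ rankOf p r π s j := by
  have hs := card_split p r π s j
  rw [rankOf]
  have hk' : (k:ℝ) ≤ ((univ.filter (fun j' => Ctime p r π s j' < Ctime p r π s j)).card : ℝ) +
      ((univ.filter (fun j' => Ctime p r π s j' = Ctime p r π s j)).card : ℝ) := by
    exact_mod_cast hs ▸ hk
  have : (0:ℝ) ≤ ((univ.filter (fun j' => Ctime p r π s j' < Ctime p r π s j)).card : ℝ) :=
    Nat.cast_nonneg _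
  linarith

lemma le_Cmax {n : ℕ} (p : Fin n → ℝ) (rv : M → ℝ) (π : M → Fin n → ℕ) (s : Fin n → M)
    (j : Fin n) : Ctime p rv π s j ≤ Cmax p rv π s :=
  le_ciSup (Set.Finite.bddAbove (Set.finite_range _)) j

lemma Cmax_le {n : ℕ} [NeZero n] (p : Fin n → ℝ) (rv : M → ℝ) (π : M → Fin n → ℕ)
    (s : Fin n → M) (v : ℝ) (h : ∀ j, Ctime p rv π s j ≤ v) : Cmax p rv π s ≤ v :=
  ciSup_le h


lemma not_beneficial_of (p : J → ℝ) (r : M → ℝ) (π : M → J → ℕ) (s s' : J → M) (j : J) (i : M)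
    (h : Function.update s j i = s')
    (h1 : ¬ (rankOf p r π s' j < rankOf p r π s j))
    (h2 : rankOf p r π s' j = rankOf p r π s j → ¬ (Ctime p r π s' j < Ctime p r π s j)) :
    ¬ Beneficial p r π s j i := by
  rw [Beneficial, h]
  rintro (hx | ⟨hx, hy⟩)
  · exact h1 hx
  · exact h2 hx hy

lemma beneficial_of_rank (p : J → ℝ) (r : M → ℝ) (π : M → J → ℕ) (s s' : J → M) (j : J) (i : M)
    (h : Function.update s j i = s')
    (hlt : rankOf p r π s' j < rankOf p r π s j) : Beneficial p r π s j i := by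
  rw [Beneficial, h]
  exact Or.inl hlt

lemma beneficial_of_le (p : J → ℝ) (r : M → ℝ) (π : M → J → ℕ) (s s' : J → M) (j : J) (i : M)
    (h : Function.update s j i = s')
    (hle : rankOf p r π s' j ≤ rankOf p r π s j)
    (hC : Ctime p r π s' j < Ctime p r π s j) : Beneficial p r π s j i := by
  rw [Beneficial, h]
  rcases lt_or_eq_of_le hle with h' | h'
  · exact Or.inl h'
  · exact Or.inr ⟨h', hC⟩


set_option maxHeartbeats 1000000 in
lemma case_small (r : ℝ) (hr0 : 0 < r) (hrg : r ≤ (Real.sqrt 5 - 1) / 2) :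
    ∃ (n : ℕ) (p : Fin n → ℝ) (π : Fin 2 → Fin n → ℕ) (opt : ℝ),
      0 < n ∧ (∀ j, 0 < p j) ∧ (∀ i, Function.Injective (π i)) ∧
      (∃ t : Fin n → Fin 2, Cmax p ![1, r] π t = opt) ∧
      (∀ t : Fin n → Fin 2, opt ≤ Cmax p ![1, r] π t) ∧
      (∃ s : Fin n → Fin 2, IsNE p ![1, r] π s) ∧
      (∀ s : Fin n → Fin 2, IsNE p ![1, r] π s →
        ((r ≤ (Real.sqrt 5 - 1) / 2 → (r + 1) * opt ≤ Cmax p ![1, r] π s) ∧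
          ((Real.sqrt 5 - 1) / 2 < r → ((r + 2) / (r + 1)) * opt ≤ Cmax p ![1, r] π s))) := by
  have h5 : Real.sqrt 5 ^ 2 = 5 := Real.sq_sqrt (by norm_num)
  have h5' : 0 ≤ Real.sqrt 5 := Real.sqrt_nonneg 5
  have h2 : 2*r + 1 ≤ Real.sqrt 5 := by linarith
  have hu : (0:ℝ) ≤ 2*r + 1 := by linarith
  have hq : r^2 + r ≤ 1 := by nlinarith [h2, h5, h5', hu]
  have hr1 : r < 1 := by nlinarith
  have hr2 : (0:ℝ) < r^2 := by positivity
  have h1r : 1 < 1/r := by rw [lt_div_iff₀ hr0]; linarith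
  have hA : 1 + 1/r ≤ 1/r^2 := by
    have key : 1/r^2 - (1+1/r) = (1 - r^2 - r)/r^2 := by field_simp; ring
    have : (0:ℝ) ≤ (1 - r^2 - r)/r^2 := div_nonneg (by linarith) hr2.le
    linarith
  have hxS1 : 1/r ≤ (r+1)/r^2 := by
    rw [div_le_div_iff₀ hr0 hr2]
    nlinarith
  have hxS2 : 1 + 1/r ≤ (r+1)/r^2 := by
    have key : (r+1)/r^2 - (1+1/r) = (r+1)*(1-r)/r^2 := by field_simp
    have : (0:ℝ) ≤ (r+1)*(1-r)/r^2 := div_nonneg (by nlinarith) hr2.le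
    linarith
  -- Ctime values
  have hc00a : Ctime ![1, 1/r] ![1,r] (fun _ j => (j:ℕ)) ![0,0] 0 = 1 := by
    simp [Ctime, Finset.sum_filter, Fin.sum_univ_two]
  have hc00b : Ctime ![1, 1/r] ![1,r] (fun _ j => (j:ℕ)) ![0,0] 1 = 1 + 1/r := by
    simp [Ctime, Finset.sum_filter, Fin.sum_univ_two]
  have hc01a : Ctime ![1, 1/r] ![1,r] (fun _ j => (j:ℕ)) ![0,1] 0 = 1 := by
    simp [Ctime, Finset.sum_filter, Fin.sum_univ_two]
  have hc01b : Ctime ![1, 1/r] ![1,r] (fun _ j => (j:ℕ)) ![0,1] 1 = 1/r^2 := by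
    simp [Ctime, Finset.sum_filter, Fin.sum_univ_two]
    rw [sq, mul_inv, div_eq_mul_inv]
  have hc10a : Ctime ![1, 1/r] ![1,r] (fun _ j => (j:ℕ)) ![1,0] 0 = 1/r := by
    simp [Ctime, Finset.sum_filter, Fin.sum_univ_two]
  have hc10b : Ctime ![1, 1/r] ![1,r] (fun _ j => (j:ℕ)) ![1,0] 1 = 1/r := by
    simp [Ctime, Finset.sum_filter, Fin.sum_univ_two]
  have hc11b : Ctime ![1, 1/r] ![1,r] (fun _ j => (j:ℕ)) ![1,1] 1 = (r+1)/r^2 := by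
    simp [Ctime, Finset.sum_filter, Fin.sum_univ_two]
    rw [div_eq_div_iff (by positivity) (by positivity)]
    field_simp
  -- rank bounds
  have hub_00_0 : rankOf ![1, 1/r] ![1,r] (fun _ j => (j:ℕ)) ![0,0] 0 ≤ 1 := by
    have h := rank_le_of ![1, 1/r] ![1,r] (fun _ j => (j:ℕ)) ![0,0] 0 1 ?_
    · push_cast at h; linarith
    · rw [Finset.card_filter, Fin.sum_univ_two, hc00a, hc00b]
      have hx : ¬(1+1/r ≤ (1:ℝ)) := by linarith
      rw [if_pos (le_refl (1:ℝ)), if_neg hx]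
  have hub_00_1 : rankOf ![1, 1/r] ![1,r] (fun _ j => (j:ℕ)) ![0,0] 1 ≤ 2 := by
    have h := rank_le_of ![1, 1/r] ![1,r] (fun _ j => (j:ℕ)) ![0,0] 1 2
      ((Finset.card_filter_le _ _).trans (by simp))
    push_cast at h; linarith
  have hlb_10_0 : (1:ℝ) ≤ rankOf ![1, 1/r] ![1,r] (fun _ j => (j:ℕ)) ![1,0] 0 := by
    have h := le_rank_of ![1, 1/r] ![1,r] (fun _ j => (j:ℕ)) ![1,0] 0 0 1 (Nat.zero_le _)
      (one_le_eqcard _ _ _ _ _)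
    push_cast at h; linarith
  have hlb_10_0' : (3:ℝ)/2 ≤ rankOf ![1, 1/r] ![1,r] (fun _ j => (j:ℕ)) ![1,0] 0 := by
    have h := le_rank_of ![1, 1/r] ![1,r] (fun _ j => (j:ℕ)) ![1,0] 0 0 2 (Nat.zero_le _) ?_
    · push_cast at h; linarith
    · rw [Finset.card_filter, Fin.sum_univ_two, hc10a, hc10b]
      rw [if_pos (rfl : (1:ℝ)/r = 1/r)]
  have hlb_01_1 : (2:ℝ) ≤ rankOf ![1, 1/r] ![1,r] (fun _ j => (j:ℕ)) ![0,1] 1 := by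
    have h := le_rank_of ![1, 1/r] ![1,r] (fun _ j => (j:ℕ)) ![0,1] 1 1 1 ?_
      (one_le_eqcard _ _ _ _ _)
    · push_cast at h; linarith
    · rw [Finset.card_filter, Fin.sum_univ_two, hc01a, hc01b]
      have hx : (1:ℝ) < 1/r^2 := by linarith
      rw [if_pos hx, if_neg (lt_irrefl (1/r^2))]
  -- the bad profile ![1,0] admits a beneficial deviation
  have hben : Beneficial ![1, 1/r] ![1,r] (fun _ j => (j:ℕ)) ![1,0] 0 0 := by
    refine beneficial_of_rank _ _ _ _ ![0,0] _ _ ?_ ?_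
    · funext x; fin_cases x <;> simp [Function.update]
    · linarith
  -- ![0,0] is a NE
  have hNE : IsNE ![1, 1/r] ![1,r] (fun _ j => (j:ℕ)) ![0,0] := by
    have k00 : ¬ Beneficial ![1, 1/r] ![1,r] (fun _ j => (j:ℕ)) ![0,0] 0 0 := by
      refine not_beneficial_of _ _ _ _ ![0,0] _ _ ?_ (by simp) (by simp)
      funext x; fin_cases x <;> simp [Function.update]
    have k01 : ¬ Beneficial ![1, 1/r] ![1,r] (fun _ j => (j:ℕ)) ![0,0] 0 1 := by
      refine not_beneficial_of _ _ _ _ ![1,0] _ _ ?_ (by linarith) ?_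
      · funext x; fin_cases x <;> simp [Function.update]
      · intro _ hC
        rw [hc10a, hc00a] at hC
        linarith
    have k10 : ¬ Beneficial ![1, 1/r] ![1,r] (fun _ j => (j:ℕ)) ![0,0] 1 0 := by
      refine not_beneficial_of _ _ _ _ ![0,0] _ _ ?_ (by simp) (by simp)
      funext x; fin_cases x <;> simp [Function.update]
    have k11 : ¬ Beneficial ![1, 1/r] ![1,r] (fun _ j => (j:ℕ)) ![0,0] 1 1 := by
      refine not_beneficial_of _ _ _ _ ![0,1] _ _ ?_ (by linarith) ?_
      · funext x; fin_cases x <;> simp [Function.update]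
      · intro _ hC
        rw [hc01b, hc00b] at hC
        linarith
    intro j i
    fin_cases j <;> fin_cases i
    · exact k00
    · exact k01
    · exact k10
    · exact k11
  refine ⟨2, ![1, 1/r], (fun _ j => (j:ℕ)), 1/r, by norm_num, ?_, ?_, ?_, ?_, ⟨![0,0], hNE⟩, ?_⟩
  · intro j
    fin_cases j
    · norm_num
    · simp
      positivity
  · intro i a b h
    exact Fin.val_injective h
  · refine ⟨![1,0], le_antisymm (Cmax_le _ _ _ _ _ ?_) ?_⟩
    · intro j
      fin_cases j
      · exact le_of_eq hc10a
      · exact le_of_eq hc10b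
    · have h := le_Cmax ![1, 1/r] ![1,r] (fun _ j => (j:ℕ)) ![1,0] 0
      rw [hc10a] at h
      exact h
  · intro t
    have hv : ∀ v : Fin 2, v = 0 ∨ v = 1 := by decide
    have hst : t = ![t 0, t 1] := by funext x; fin_cases x <;> rfl
    rcases hv (t 0) with h0 | h0 <;> rcases hv (t 1) with h1 | h1 <;>
      rw [h0, h1] at hst <;> rw [hst]
    · have h := le_Cmax ![1, 1/r] ![1,r] (fun _ j => (j:ℕ)) ![0,0] 1
      rw [hc00b] at h
      linarith
    · have h := le_Cmax ![1, 1/r] ![1,r] (fun _ j => (j:ℕ)) ![0,1] 1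
      rw [hc01b] at h
      linarith
    · have h := le_Cmax ![1, 1/r] ![1,r] (fun _ j => (j:ℕ)) ![1,0] 0
      rw [hc10a] at h
      linarith
    · have h := le_Cmax ![1, 1/r] ![1,r] (fun _ j => (j:ℕ)) ![1,1] 1
      rw [hc11b] at h
      linarith
  · intro s hs
    have hopt : (r + 1) * (1/r) = 1 + 1/r := by field_simp
    constructor
    · intro _
      rw [hopt]
      have hv : ∀ v : Fin 2, v = 0 ∨ v = 1 := by decide
      have hst : s = ![s 0, s 1] := by funext x; fin_cases x <;> rfl
      rcases hv (s 0) with h0 | h0 <;> rcases hv (s 1) with h1 | h1 <;>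
        rw [h0, h1] at hst
      · rw [hst]
        have h := le_Cmax ![1, 1/r] ![1,r] (fun _ j => (j:ℕ)) ![0,0] 1
        rw [hc00b] at h
        linarith
      · rw [hst]
        have h := le_Cmax ![1, 1/r] ![1,r] (fun _ j => (j:ℕ)) ![0,1] 1
        rw [hc01b] at h
        linarith
      · exfalso
        exact (hst ▸ hs) 0 0 hben
      · rw [hst]
        have h := le_Cmax ![1, 1/r] ![1,r] (fun _ j => (j:ℕ)) ![1,1] 1
        rw [hc11b] at h
        linarith
    · intro hgr
      exact absurd hgr (not_lt.mpr hrg)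

set_option maxHeartbeats 1600000 in
lemma case_large (r : ℝ) (hr0 : 0 < r) (hr1 : r ≤ 1) (hgr : (Real.sqrt 5 - 1) / 2 < r) :
    ∃ (n : ℕ) (p : Fin n → ℝ) (π : Fin 2 → Fin n → ℕ) (opt : ℝ),
      0 < n ∧ (∀ j, 0 < p j) ∧ (∀ i, Function.Injective (π i)) ∧
      (∃ t : Fin n → Fin 2, Cmax p ![1, r] π t = opt) ∧
      (∀ t : Fin n → Fin 2, opt ≤ Cmax p ![1, r] π t) ∧
      (∃ s : Fin n → Fin 2, IsNE p ![1, r] π s) ∧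
      (∀ s : Fin n → Fin 2, IsNE p ![1, r] π s →
        ((r ≤ (Real.sqrt 5 - 1) / 2 → (r + 1) * opt ≤ Cmax p ![1, r] π s) ∧
          ((Real.sqrt 5 - 1) / 2 < r → ((r + 2) / (r + 1)) * opt ≤ Cmax p ![1, r] π s))) := by
  have h5 : Real.sqrt 5 ^ 2 = 5 := Real.sq_sqrt (by norm_num)
  have h5' : 0 ≤ Real.sqrt 5 := Real.sqrt_nonneg 5
  have h2 : Real.sqrt 5 < 2*r + 1 := by linarith
  have hu : (0:ℝ) < 2*r + 1 := by linarith
  have hq : 1 < r^2 + r := by nlinarith [h2, h5, h5', hu]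
  have hq0 : 0 < r^2 + r - 1 := by linarith
  have h1r : 1 ≤ 1/r := by rw [le_div_iff₀ hr0]; nlinarith
  have hqr : (r^2+r-1)/r ≤ 1 := by rw [div_le_one hr0]; nlinarith
  have hy : (r^2+r-1)/r < r^2+r := by rw [div_lt_iff₀ hr0]; nlinarith [pow_pos hr0 3]
  have hx1 : r+1 ≤ (r+1)/r := by rw [le_div_iff₀ hr0]; nlinarith
  have hx2 : r+1 ≤ (r+2)/r := by rw [le_div_iff₀ hr0]; nlinarith
  have hx3 : r+2 ≤ (r+2)/r := by rw [le_div_iff₀ hr0]; nlinarith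
  have hx4 : r+2 ≤ (r+1)^2/r := by rw [le_div_iff₀ hr0]; nlinarith
  have hx5 : r+1 ≤ (r+1)^2/r := by linarith
  have hx6 : r+1 ≤ (r+1)^2 := by nlinarith
  have hx7 : r+2 ≤ (r+1)^2 := by nlinarith
  have hx8 : r+1 ≤ r^2+2*r := by nlinarith
  have hx9 : r^2+r-1 ≤ 1/r := by
    rw [le_div_iff₀ hr0]
    nlinarith [mul_nonneg (sub_nonneg.mpr hr1) (sq_nonneg (r+1))]
  -- Ctime values
  have cA0 : Ctime ![1, r^2+r-1, r+1] ![1,r] ![![0,1,2],![1,0,2]] ![0,0,0] 0 = 1 := by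
    simp [Ctime, Finset.sum_filter, Fin.sum_univ_three]
  have cA1 : Ctime ![1, r^2+r-1, r+1] ![1,r] ![![0,1,2],![1,0,2]] ![0,0,0] 1 = r^2+r := by
    simp [Ctime, Finset.sum_filter, Fin.sum_univ_three]
  have cA2 : Ctime ![1, r^2+r-1, r+1] ![1,r] ![![0,1,2],![1,0,2]] ![0,0,0] 2 = (r+1)^2 := by
    simp [Ctime, Finset.sum_filter, Fin.sum_univ_three]
    ring
  have cB0 : Ctime ![1, r^2+r-1, r+1] ![1,r] ![![0,1,2],![1,0,2]] ![0,0,1] 0 = 1 := by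
    simp [Ctime, Finset.sum_filter, Fin.sum_univ_three]
  have cB1 : Ctime ![1, r^2+r-1, r+1] ![1,r] ![![0,1,2],![1,0,2]] ![0,0,1] 1 = r^2+r := by
    simp [Ctime, Finset.sum_filter, Fin.sum_univ_three]
  have cB2 : Ctime ![1, r^2+r-1, r+1] ![1,r] ![![0,1,2],![1,0,2]] ![0,0,1] 2 = (r+1)/r := by
    simp [Ctime, Finset.sum_filter, Fin.sum_univ_three]
  have cC0 : Ctime ![1, r^2+r-1, r+1] ![1,r] ![![0,1,2],![1,0,2]] ![0,1,0] 0 = 1 := by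
    simp [Ctime, Finset.sum_filter, Fin.sum_univ_three]
  have cC1 : Ctime ![1, r^2+r-1, r+1] ![1,r] ![![0,1,2],![1,0,2]] ![0,1,0] 1 = (r^2+r-1)/r := by
    simp [Ctime, Finset.sum_filter, Fin.sum_univ_three]
  have cC2 : Ctime ![1, r^2+r-1, r+1] ![1,r] ![![0,1,2],![1,0,2]] ![0,1,0] 2 = r+2 := by
    simp [Ctime, Finset.sum_filter, Fin.sum_univ_three]
    ring
  have cD0 : Ctime ![1, r^2+r-1, r+1] ![1,r] ![![0,1,2],![1,0,2]] ![0,1,1] 0 = 1 := by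
    simp [Ctime, Finset.sum_filter, Fin.sum_univ_three]
  have cD1 : Ctime ![1, r^2+r-1, r+1] ![1,r] ![![0,1,2],![1,0,2]] ![0,1,1] 1 = (r^2+r-1)/r := by
    simp [Ctime, Finset.sum_filter, Fin.sum_univ_three]
  have cD2 : Ctime ![1, r^2+r-1, r+1] ![1,r] ![![0,1,2],![1,0,2]] ![0,1,1] 2 = r+2 := by
    simp [Ctime, Finset.sum_filter, Fin.sum_univ_three]
    rw [div_eq_iff hr0.ne']
    ring
  have cE0 : Ctime ![1, r^2+r-1, r+1] ![1,r] ![![0,1,2],![1,0,2]] ![1,0,0] 0 = 1/r := by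
    simp [Ctime, Finset.sum_filter, Fin.sum_univ_three]
  have cE1 : Ctime ![1, r^2+r-1, r+1] ![1,r] ![![0,1,2],![1,0,2]] ![1,0,0] 1 = r^2+r-1 := by
    simp [Ctime, Finset.sum_filter, Fin.sum_univ_three]
  have cE2 : Ctime ![1, r^2+r-1, r+1] ![1,r] ![![0,1,2],![1,0,2]] ![1,0,0] 2 = r^2+2*r := by
    simp [Ctime, Finset.sum_filter, Fin.sum_univ_three]
    ring
  have cF2 : Ctime ![1, r^2+r-1, r+1] ![1,r] ![![0,1,2],![1,0,2]] ![1,0,1] 2 = (r+2)/r := by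
    simp [Ctime, Finset.sum_filter, Fin.sum_univ_three]
    rw [div_eq_div_iff hr0.ne' hr0.ne']
    ring
  have cG0 : Ctime ![1, r^2+r-1, r+1] ![1,r] ![![0,1,2],![1,0,2]] ![1,1,0] 0 = r+1 := by
    simp [Ctime, Finset.sum_filter, Fin.sum_univ_three]
    rw [div_eq_iff hr0.ne']
    ring
  have cG1 : Ctime ![1, r^2+r-1, r+1] ![1,r] ![![0,1,2],![1,0,2]] ![1,1,0] 1 = (r^2+r-1)/r := by
    simp [Ctime, Finset.sum_filter, Fin.sum_univ_three]
  have cG2 : Ctime ![1, r^2+r-1, r+1] ![1,r] ![![0,1,2],![1,0,2]] ![1,1,0] 2 = r+1 := by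
    simp [Ctime, Finset.sum_filter, Fin.sum_univ_three]
  have cH2 : Ctime ![1, r^2+r-1, r+1] ![1,r] ![![0,1,2],![1,0,2]] ![1,1,1] 2 = (r+1)^2/r := by
    simp [Ctime, Finset.sum_filter, Fin.sum_univ_three]
    rw [div_eq_div_iff hr0.ne' hr0.ne']
    ring
  -- rank bounds
  have rC0_ub : rankOf ![1, r^2+r-1, r+1] ![1,r] ![![0,1,2],![1,0,2]] ![0,1,0] 0 ≤ 2 := by
    have h := rank_le_of ![1, r^2+r-1, r+1] ![1,r] ![![0,1,2],![1,0,2]] ![0,1,0] 0 2 ?_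
    · push_cast at h; linarith
    · rw [Finset.card_filter, Fin.sum_univ_three, cC0, cC1, cC2]
      have hx : ¬(r+2 ≤ (1:ℝ)) := by linarith
      rw [if_pos (le_refl (1:ℝ)), if_neg hx]
      split_ifs <;> norm_num
  have rC1_ub : rankOf ![1, r^2+r-1, r+1] ![1,r] ![![0,1,2],![1,0,2]] ![0,1,0] 1 ≤ 2 := by
    have h := rank_le_of ![1, r^2+r-1, r+1] ![1,r] ![![0,1,2],![1,0,2]] ![0,1,0] 1 2 ?_
    · push_cast at h; linarith
    · rw [Finset.card_filter, Fin.sum_univ_three, cC0, cC1, cC2]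
      have hx : ¬(r+2 ≤ (r^2+r-1)/r) := by linarith
      rw [if_pos (le_refl ((r^2+r-1)/r)), if_neg hx]
      split_ifs <;> norm_num
  have rC2_ub : rankOf ![1, r^2+r-1, r+1] ![1,r] ![![0,1,2],![1,0,2]] ![0,1,0] 2 ≤ 3 := by
    have h := rank_le_of ![1, r^2+r-1, r+1] ![1,r] ![![0,1,2],![1,0,2]] ![0,1,0] 2 3
      ((Finset.card_filter_le _ _).trans (by simp))
    push_cast at h; linarith
  have rG0_lb : (5:ℝ)/2 ≤ rankOf ![1, r^2+r-1, r+1] ![1,r] ![![0,1,2],![1,0,2]] ![1,1,0] 0 := by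
    have h := le_rank_of ![1, r^2+r-1, r+1] ![1,r] ![![0,1,2],![1,0,2]] ![1,1,0] 0 1 2 ?_ ?_
    · push_cast at h; linarith
    · rw [Finset.card_filter, Fin.sum_univ_three, cG0, cG1, cG2]
      have hx : (r^2+r-1)/r < r+1 := by linarith
      rw [if_pos hx, if_neg (lt_irrefl (r+1))]
    · rw [Finset.card_filter, Fin.sum_univ_three, cG0, cG1, cG2]
      have hx : ¬((r^2+r-1)/r = r+1) := by intro hh; linarith
      rw [if_pos (rfl : (r:ℝ)+1 = r+1), if_neg hx]
  have rA1_lb : (2:ℝ) ≤ rankOf ![1, r^2+r-1, r+1] ![1,r] ![![0,1,2],![1,0,2]] ![0,0,0] 1 := by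
    have h := le_rank_of ![1, r^2+r-1, r+1] ![1,r] ![![0,1,2],![1,0,2]] ![0,0,0] 1 1 1 ?_
      (one_le_eqcard _ _ _ _ _)
    · push_cast at h; linarith
    · rw [Finset.card_filter, Fin.sum_univ_three, cA0, cA1, cA2]
      have hx : (1:ℝ) < r^2+r := hq
      rw [if_pos hx]
      split_ifs <;> norm_num
  have rD2_lb : (3:ℝ) ≤ rankOf ![1, r^2+r-1, r+1] ![1,r] ![![0,1,2],![1,0,2]] ![0,1,1] 2 := by
    have h := le_rank_of ![1, r^2+r-1, r+1] ![1,r] ![![0,1,2],![1,0,2]] ![0,1,1] 2 2 1 ?_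
      (one_le_eqcard _ _ _ _ _)
    · push_cast at h; linarith
    · rw [Finset.card_filter, Fin.sum_univ_three, cD0, cD1, cD2]
      have hx1 : (1:ℝ) < r+2 := by linarith
      have hx2 : (r^2+r-1)/r < r+2 := by linarith
      rw [if_pos hx1, if_pos hx2, if_neg (lt_irrefl (r+2))]
  have rB1_lb : (2:ℝ) ≤ rankOf ![1, r^2+r-1, r+1] ![1,r] ![![0,1,2],![1,0,2]] ![0,0,1] 1 := by
    have h := le_rank_of ![1, r^2+r-1, r+1] ![1,r] ![![0,1,2],![1,0,2]] ![0,0,1] 1 1 1 ?_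
      (one_le_eqcard _ _ _ _ _)
    · push_cast at h; linarith
    · rw [Finset.card_filter, Fin.sum_univ_three, cB0, cB1, cB2]
      have hx : (1:ℝ) < r^2+r := hq
      rw [if_pos hx]
      split_ifs <;> norm_num
  have rD1_ub : rankOf ![1, r^2+r-1, r+1] ![1,r] ![![0,1,2],![1,0,2]] ![0,1,1] 1 ≤ 2 := by
    have h := rank_le_of ![1, r^2+r-1, r+1] ![1,r] ![![0,1,2],![1,0,2]] ![0,1,1] 1 2 ?_
    · push_cast at h; linarith
    · rw [Finset.card_filter, Fin.sum_univ_three, cD0, cD1, cD2]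
      have hx : ¬(r+2 ≤ (r^2+r-1)/r) := by linarith
      rw [if_pos (le_refl ((r^2+r-1)/r)), if_neg hx]
      split_ifs <;> norm_num
  have rA0_ub : rankOf ![1, r^2+r-1, r+1] ![1,r] ![![0,1,2],![1,0,2]] ![0,0,0] 0 ≤ 1 := by
    have h := rank_le_of ![1, r^2+r-1, r+1] ![1,r] ![![0,1,2],![1,0,2]] ![0,0,0] 0 1 ?_
    · push_cast at h; linarith
    · rw [Finset.card_filter, Fin.sum_univ_three, cA0, cA1, cA2]
      have hx1 : ¬(r^2+r ≤ (1:ℝ)) := by linarith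
      have hx2 : ¬((r+1)^2 ≤ (1:ℝ)) := by intro hh; linarith
      rw [if_pos (le_refl (1:ℝ)), if_neg hx1, if_neg hx2]
  have rE0_lb : (3:ℝ)/2 ≤ rankOf ![1, r^2+r-1, r+1] ![1,r] ![![0,1,2],![1,0,2]] ![1,0,0] 0 := by
    have h := le_rank_of' ![1, r^2+r-1, r+1] ![1,r] ![![0,1,2],![1,0,2]] ![1,0,0] 0 2 ?_
    · push_cast at h; linarith
    · rw [Finset.card_filter, Fin.sum_univ_three, cE0, cE1, cE2]
      rw [if_pos (le_refl ((1:ℝ)/r)), if_pos hx9]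
      split_ifs <;> norm_num
  -- beneficial deviations for the three non-NE profiles
  have benB : Beneficial ![1, r^2+r-1, r+1] ![1,r] ![![0,1,2],![1,0,2]] ![0,0,1] 1 1 := by
    refine beneficial_of_le _ _ _ _ ![0,1,1] _ _ ?_ (by linarith) ?_
    · funext x; fin_cases x <;> simp [Function.update]
    · rw [cD1, cB1]; linarith
  have benE : Beneficial ![1, r^2+r-1, r+1] ![1,r] ![![0,1,2],![1,0,2]] ![1,0,0] 0 0 := by
    refine beneficial_of_rank _ _ _ _ ![0,0,0] _ _ ?_ (by linarith)
    funext x; fin_cases x <;> simp [Function.update]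
  have benG : Beneficial ![1, r^2+r-1, r+1] ![1,r] ![![0,1,2],![1,0,2]] ![1,1,0] 0 0 := by
    refine beneficial_of_rank _ _ _ _ ![0,1,0] _ _ ?_ (by linarith)
    funext x; fin_cases x <;> simp [Function.update]
  -- s* = ![0,1,0] is a NE
  have hNE : IsNE ![1, r^2+r-1, r+1] ![1,r] ![![0,1,2],![1,0,2]] ![0,1,0] := by
    have k00 : ¬ Beneficial ![1, r^2+r-1, r+1] ![1,r] ![![0,1,2],![1,0,2]] ![0,1,0] 0 0 := by
      refine not_beneficial_of _ _ _ _ ![0,1,0] _ _ ?_ (by simp) (by simp)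
      funext x; fin_cases x <;> simp [Function.update]
    have k01 : ¬ Beneficial ![1, r^2+r-1, r+1] ![1,r] ![![0,1,2],![1,0,2]] ![0,1,0] 0 1 := by
      refine not_beneficial_of _ _ _ _ ![1,1,0] _ _ ?_ (by linarith) ?_
      · funext x; fin_cases x <;> simp [Function.update]
      · intro _ hC
        rw [cG0, cC0] at hC
        linarith
    have k10 : ¬ Beneficial ![1, r^2+r-1, r+1] ![1,r] ![![0,1,2],![1,0,2]] ![0,1,0] 1 1 := by
      refine not_beneficial_of _ _ _ _ ![0,1,0] _ _ ?_ (by simp) (by simp)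
      funext x; fin_cases x <;> simp [Function.update]
    have k11 : ¬ Beneficial ![1, r^2+r-1, r+1] ![1,r] ![![0,1,2],![1,0,2]] ![0,1,0] 1 0 := by
      refine not_beneficial_of _ _ _ _ ![0,0,0] _ _ ?_ (by linarith) ?_
      · funext x; fin_cases x <;> simp [Function.update]
      · intro _ hC
        rw [cA1, cC1] at hC
        linarith
    have k20 : ¬ Beneficial ![1, r^2+r-1, r+1] ![1,r] ![![0,1,2],![1,0,2]] ![0,1,0] 2 0 := by
      refine not_beneficial_of _ _ _ _ ![0,1,0] _ _ ?_ (by simp) (by simp)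
      funext x; fin_cases x <;> simp [Function.update]
    have k21 : ¬ Beneficial ![1, r^2+r-1, r+1] ![1,r] ![![0,1,2],![1,0,2]] ![0,1,0] 2 1 := by
      refine not_beneficial_of _ _ _ _ ![0,1,1] _ _ ?_ (by linarith) ?_
      · funext x; fin_cases x <;> simp [Function.update]
      · intro _ hC
        rw [cD2, cC2] at hC
        linarith
    intro j i
    fin_cases j <;> fin_cases i
    · exact k00
    · exact k01
    · exact k11
    · exact k10
    · exact k20
    · exact k21
  refine ⟨3, ![1, r^2+r-1, r+1], ![![0,1,2],![1,0,2]], r+1, by norm_num, ?_, ?_, ?_, ?_,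
    ⟨![0,1,0], hNE⟩, ?_⟩
  · intro j
    fin_cases j
    · norm_num
    · simpa using hq0
    · simp; linarith
  · intro i
    fin_cases i
    · intro a b h
      fin_cases a <;> fin_cases b <;> simp_all
    · intro a b h
      fin_cases a <;> fin_cases b <;> simp_all
  · refine ⟨![1,1,0], le_antisymm (Cmax_le _ _ _ _ _ ?_) ?_⟩
    · intro j
      fin_cases j
      · exact le_of_eq cG0
      · exact le_of_eq cG1 |>.trans (by linarith)
      · exact le_of_eq cG2
    · have h := le_Cmax ![1, r^2+r-1, r+1] ![1,r] ![![0,1,2],![1,0,2]] ![1,1,0] 0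
      rw [cG0] at h
      exact h
  · intro t
    have hv : ∀ v : Fin 2, v = 0 ∨ v = 1 := by decide
    have hst : t = ![t 0, t 1, t 2] := by funext x; fin_cases x <;> rfl
    rcases hv (t 0) with h0 | h0 <;> rcases hv (t 1) with h1 | h1 <;> rcases hv (t 2) with hh2 | hh2 <;>
      rw [h0, h1, hh2] at hst <;> rw [hst]
    · have h := le_Cmax ![1, r^2+r-1, r+1] ![1,r] ![![0,1,2],![1,0,2]] ![0,0,0] 2
      rw [cA2] at h
      linarith
    · have h := le_Cmax ![1, r^2+r-1, r+1] ![1,r] ![![0,1,2],![1,0,2]] ![0,0,1] 2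
      rw [cB2] at h
      linarith
    · have h := le_Cmax ![1, r^2+r-1, r+1] ![1,r] ![![0,1,2],![1,0,2]] ![0,1,0] 2
      rw [cC2] at h
      linarith
    · have h := le_Cmax ![1, r^2+r-1, r+1] ![1,r] ![![0,1,2],![1,0,2]] ![0,1,1] 2
      rw [cD2] at h
      linarith
    · have h := le_Cmax ![1, r^2+r-1, r+1] ![1,r] ![![0,1,2],![1,0,2]] ![1,0,0] 2
      rw [cE2] at h
      linarith
    · have h := le_Cmax ![1, r^2+r-1, r+1] ![1,r] ![![0,1,2],![1,0,2]] ![1,0,1] 2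
      rw [cF2] at h
      linarith
    · have h := le_Cmax ![1, r^2+r-1, r+1] ![1,r] ![![0,1,2],![1,0,2]] ![1,1,0] 0
      rw [cG0] at h
      linarith
    · have h := le_Cmax ![1, r^2+r-1, r+1] ![1,r] ![![0,1,2],![1,0,2]] ![1,1,1] 2
      rw [cH2] at h
      linarith
  · intro s hs
    constructor
    · intro hle
      exact absurd hgr (not_lt.mpr hle)
    · intro _
      have hopt : ((r+2)/(r+1)) * (r+1) = r+2 := by
        rw [div_mul_cancel₀]
        intro hh; linarith
      rw [hopt]
      have hv : ∀ v : Fin 2, v = 0 ∨ v = 1 := by decide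
      have hst : s = ![s 0, s 1, s 2] := by funext x; fin_cases x <;> rfl
      rcases hv (s 0) with h0 | h0 <;> rcases hv (s 1) with h1 | h1 <;> rcases hv (s 2) with hh2 | hh2 <;>
        rw [h0, h1, hh2] at hst
      · rw [hst]
        have h := le_Cmax ![1, r^2+r-1, r+1] ![1,r] ![![0,1,2],![1,0,2]] ![0,0,0] 2
        rw [cA2] at h
        linarith
      · exfalso
        exact (hst ▸ hs) 1 1 benB
      · rw [hst]
        have h := le_Cmax ![1, r^2+r-1, r+1] ![1,r] ![![0,1,2],![1,0,2]] ![0,1,0] 2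
        rw [cC2] at h
        linarith
      · rw [hst]
        have h := le_Cmax ![1, r^2+r-1, r+1] ![1,r] ![![0,1,2],![1,0,2]] ![0,1,1] 2
        rw [cD2] at h
        linarith
      · exfalso
        exact (hst ▸ hs) 0 0 benE
      · rw [hst]
        have h := le_Cmax ![1, r^2+r-1, r+1] ![1,r] ![![0,1,2],![1,0,2]] ![1,0,1] 2
        rw [cF2] at h
        linarith
      · exfalso
        exact (hst ▸ hs) 0 0 benG
      · rw [hst]
        have h := le_Cmax ![1, r^2+r-1, r+1] ![1,r] ![![0,1,2],![1,0,2]] ![1,1,1] 2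
        rw [cH2] at h
        linarith

/-- PoS lower bound on two related machines: for every `0 < r ≤ 1` there is a game
admitting a NE in which every NE has makespan at least `(r+1)·OPT` if
`r ≤ (√5-1)/2`, and at least `((r+2)/(r+1))·OPT` if `r > (√5-1)/2`. -/
theorem PoS_related_lower (r : ℝ) (hr0 : 0 < r) (hr1 : r ≤ 1) :
    ∃ (n : ℕ) (p : Fin n → ℝ) (π : Fin 2 → Fin n → ℕ) (opt : ℝ),
      0 < n ∧ (∀ j, 0 < p j) ∧ (∀ i, Function.Injective (π i)) ∧
      (∃ t : Fin n → Fin 2, Cmax p ![1, r] π t = opt) ∧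
      (∀ t : Fin n → Fin 2, opt ≤ Cmax p ![1, r] π t) ∧
      (∃ s : Fin n → Fin 2, IsNE p ![1, r] π s) ∧
      (∀ s : Fin n → Fin 2, IsNE p ![1, r] π s →
        ((r ≤ (Real.sqrt 5 - 1) / 2 → (r + 1) * opt ≤ Cmax p ![1, r] π s) ∧
          ((Real.sqrt 5 - 1) / 2 < r → ((r + 2) / (r + 1)) * opt ≤ Cmax p ![1, r] π s))) := by
  rcases le_or_gt r ((Real.sqrt 5 - 1) / 2) with h | h
  · exact case_small r hr0 h
  · exact case_large r hr0 hr1 h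
end
end

section
/- Consider a scheduling game on two identical machines with arbitrary positive processing times, where the priority lists are inversed (π₂ is the reverse linear order of π₁), and where the job set J is partitioned into arbitrary competition sets S₁,…,S_c, the rank of each job being computed only among the jobs of its own competition set. Then every greedy profile is a pure Nash equilibrium; in particular, a pure Nash equilibrium exists for any partition of J into competition sets. -/
/-!
Greedy on two machines with inversed priority lists maintains two invariants: on each machine
the jobs assigned so far precede, in that machine's list, every job not assigned to it; and the
completion time of every job is at most the load of the other machine plus its own processing
time. A job `j` deviating to the other machine therefore lands behind all of that machine's jobs
and finishes at `load + p j`, no earlier than before. Every job that finished no later than `j`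
still finishes strictly before `j` after the deviation: jobs on the target machine keep their
completion times, which are at most its load, and jobs ahead of `j` on its own machine keep
theirs, which were at least `p j` below `j`'s. Hence neither `j`'s rank in its competition set
nor its completion time can improve.
-/

open Finset
open scoped Classical

noncomputable section

variable {J M : Type*} [Fintype J]

/-- Partial assignments reachable by the greedy algorithm on identical machines:
repeatedly pick a machine of minimal current load and assign to it the first
not-yet-assigned job in its priority list. -/
inductive GreedyIdentical (p : J → ℝ) (π : M → J → ℕ) : (J → Option M) → Prop
  | empty : GreedyIdentical p π (fun _ => none)
  | step (f : J → Option M) (i : M) (j : J)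
      (hf : GreedyIdentical p π f) (hj : f j = none)
      (hmin : ∀ i', (∑ j' ∈ univ.filter (fun j' => f j' = some i), p j') ≤
          ∑ j' ∈ univ.filter (fun j' => f j' = some i'), p j')
      (hfirst : ∀ j', f j' = none → j' ≠ j → π i j < π i j') :
      GreedyIdentical p π (Function.update f j (some i))

variable {K : Type*}

/-- Rank of job `j` among the jobs of its own competition class (`cls` gives the
competition class of each job). -/
def rankC (cls : J → K) (p : J → ℝ) (r : M → ℝ) (π : M → J → ℕ) (s : J → M) (j : J) : ℝ :=
  ((univ.filter (fun j' => cls j' = cls j ∧ Ctime p r π s j' < Ctime p r π s j)).card : ℝ) +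
    (((univ.filter (fun j' => cls j' = cls j ∧
      Ctime p r π s j' = Ctime p r π s j)).card : ℝ) + 1) / 2

/-- Beneficial deviation in the game with competition classes. -/
def BeneficialC (cls : J → K) (p : J → ℝ) (r : M → ℝ) (π : M → J → ℕ)
    (s : J → M) (j : J) (i : M) : Prop :=
  rankC cls p r π (Function.update s j i) j < rankC cls p r π s j ∨
    (rankC cls p r π (Function.update s j i) j = rankC cls p r π s j ∧
      Ctime p r π (Function.update s j i) j < Ctime p r π s j)

/-- Pure Nash equilibrium of the game with competition classes. -/
def IsNEC (cls : J → K) (p : J → ℝ) (r : M → ℝ) (π : M → J → ℕ) (s : J → M) : Prop :=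
  ∀ j i, ¬ BeneficialC cls p r π s j i

open Function

section Ranks

variable (cls : J → K) (p : J → ℝ) (r : M → ℝ) (π : M → J → ℕ)

lemma rankC_eq (s : J → M) (j : J) :
    rankC cls p r π s j =
      ((#{j' | cls j' = cls j ∧ Ctime p r π s j' < Ctime p r π s j} : ℝ) +
        #{j' | cls j' = cls j ∧ Ctime p r π s j' ≤ Ctime p r π s j} + 1) / 2 := by
  have hsplit : univ.filter (fun j' => cls j' = cls j ∧ Ctime p r π s j' ≤ Ctime p r π s j) =
      univ.filter (fun j' => cls j' = cls j ∧ Ctime p r π s j' < Ctime p r π s j) ∪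
        univ.filter (fun j' => cls j' = cls j ∧ Ctime p r π s j' = Ctime p r π s j) := by
    rw [← filter_or]
    exact filter_congr fun _ _ => by rw [le_iff_lt_or_eq, and_or_left]
  rw [rankC, hsplit, card_union_of_disjoint
    (disjoint_filter.2 fun _ _ hlt heq => hlt.2.ne heq.2)]
  push_cast
  ring

lemma rankC_le_rankC {s s' : J → M} {j : J}
    (h : ∀ j' ≠ j, Ctime p r π s j' ≤ Ctime p r π s j → Ctime p r π s' j' < Ctime p r π s' j) :
    rankC cls p r π s j ≤ rankC cls p r π s' j := by
  have hlt : #{j' | cls j' = cls j ∧ Ctime p r π s j' < Ctime p r π s j} ≤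
      #{j' | cls j' = cls j ∧ Ctime p r π s' j' < Ctime p r π s' j} := by
    refine card_le_card fun j' hj' => ?_
    simp only [mem_filter, mem_univ, true_and] at hj' ⊢
    exact ⟨hj'.1, h j' (by rintro rfl; exact lt_irrefl _ hj'.2) hj'.2.le⟩
  have hle : #{j' | cls j' = cls j ∧ Ctime p r π s j' ≤ Ctime p r π s j} ≤
      #{j' | cls j' = cls j ∧ Ctime p r π s' j' ≤ Ctime p r π s' j} := by
    refine card_le_card fun j' hj' => ?_
    simp only [mem_filter, mem_univ, true_and] at hj' ⊢
    refine ⟨hj'.1, ?_⟩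
    rcases eq_or_ne j' j with rfl | hne
    · exact le_rfl
    · exact (h j' hne hj'.2).le
  rw [rankC_eq, rankC_eq]
  gcongr

lemma not_beneficialC_self (s : J → M) (j : J) : ¬ BeneficialC cls p r π s j (s j) := by
  simp [BeneficialC]

lemma not_beneficialC_of_forall_lt {s : J → M} {j : J} {i : M}
    (hj : Ctime p r π s j ≤ Ctime p r π (update s j i) j)
    (h : ∀ j' ≠ j, Ctime p r π s j' ≤ Ctime p r π s j →
      Ctime p r π (update s j i) j' < Ctime p r π (update s j i) j) :
    ¬ BeneficialC cls p r π s j i := by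
  rintro (hrank | ⟨-, htime⟩)
  · exact (rankC_le_rankC cls p r π h).not_gt hrank
  · exact hj.not_gt htime

end Ranks

def load (p : J → ℝ) (f : J → Option M) (i : M) : ℝ :=
  ∑ j ∈ univ.filter (fun j => f j = some i), p j

section Load

variable (p : J → ℝ) {f : J → Option M} {j : J}

lemma load_update_self (hj : f j = none) (i : M) :
    load p (update f j (some i)) i = load p f i + p j := by
  have hfilter : univ.filter (fun x => update f j (some i) x = some i) =
      insert j (univ.filter (fun x => f x = some i)) := by
    ext x
    rcases eq_or_ne x j with rfl | hx
    · simp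
    · simp [hx]
  rw [load, hfilter, sum_insert (by simp [hj]), add_comm, load]

lemma load_update_of_ne (hj : f j = none) {i i' : M} (hi : i' ≠ i) :
    load p (update f j (some i)) i' = load p f i' := by
  refine sum_congr (filter_congr fun x _ => ?_) fun _ _ => rfl
  rcases eq_or_ne x j with rfl | hx
  · simp [hj, hi.symm]
  · rw [update_of_ne hx]

lemma load_le_load_update (hp : ∀ j, 0 ≤ p j) (hj : f j = none) (i i' : M) :
    load p f i' ≤ load p (update f j (some i)) i' := by
  rcases eq_or_ne i' i with rfl | hi
  · rw [load_update_self p hj]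
    linarith [hp j]
  · rw [load_update_of_ne p hj hi]

end Load

section CompletionTimes

variable (p : J → ℝ) (π : M → J → ℕ)

lemma Ctime_update_of_lt (r : M → ℝ) {s : J → M} {j j' : J} (i : M) (hne : j' ≠ j)
    (hlt : π (s j') j' < π (s j') j) :
    Ctime p r π (update s j i) j' = Ctime p r π s j' := by
  simp only [Ctime, update_of_ne hne]
  congr 1
  refine sum_congr (filter_congr fun x _ => ?_) fun _ _ => rfl
  rcases eq_or_ne x j with rfl | hx
  · simp [hlt.not_ge]
  · rw [update_of_ne hx]

lemma Ctime_one_le_load (hp : ∀ j, 0 ≤ p j) (s : J → M) (j : J) :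
    Ctime p (fun _ => 1) π s j ≤ load p (some ∘ s) (s j) := by
  rw [Ctime, div_one]
  exact sum_le_sum_of_subset_of_nonneg (fun x hx => by simp_all) fun x _ _ => hp x

lemma Ctime_add_le_of_lt (hp : ∀ j, 0 ≤ p j) {s : J → M} {a b : J} (hab : s a = s b)
    (hlt : π (s b) a < π (s b) b) :
    Ctime p (fun _ => 1) π s a + p b ≤ Ctime p (fun _ => 1) π s b := by
  simp only [Ctime, div_one, hab]
  have hb : b ∉ univ.filter (fun x => s x = s b ∧ π (s b) x ≤ π (s b) a) := by
    simp [hlt]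
  calc (∑ x ∈ univ.filter (fun x => s x = s b ∧ π (s b) x ≤ π (s b) a), p x) + p b
      = ∑ x ∈ insert b (univ.filter (fun x => s x = s b ∧ π (s b) x ≤ π (s b) a)), p x := by
        rw [sum_insert hb, add_comm]
    _ ≤ ∑ x ∈ univ.filter (fun x => s x = s b ∧ π (s b) x ≤ π (s b) b), p x := by
        refine sum_le_sum_of_subset_of_nonneg (fun x hx => ?_) fun x _ _ => hp x
        rcases mem_insert.1 hx with rfl | hx
        · simp
        · simp only [mem_filter, mem_univ, true_and] at hx ⊢
          exact ⟨hx.1, hx.2.trans hlt.le⟩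

lemma Ctime_update_self_of_forall_le {s : J → M} {j : J} {i : M} (hj : s j ≠ i)
    (hlast : ∀ x, s x = i → π i x ≤ π i j) :
    Ctime p (fun _ => 1) π (update s j i) j = load p (some ∘ s) i + p j := by
  have hfilter : univ.filter (fun x => update s j i x = i ∧ π i x ≤ π i j) =
      insert j (univ.filter (fun x => (some ∘ s) x = some i)) := by
    ext x
    rcases eq_or_ne x j with rfl | hx
    · simp
    · simp only [mem_filter, mem_univ, true_and, mem_insert, hx, false_or, update_of_ne hx,
        comp_apply, Option.some_inj]
      exact ⟨And.left, fun hx => ⟨hx, hlast x hx⟩⟩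
  rw [Ctime, div_one, update_self, hfilter, sum_insert (by simp [hj]), add_comm, load]

end CompletionTimes

section Greedy

variable {p : J → ℝ} {π : Fin 2 → J → ℕ}

omit [Fintype J] in
lemma inversed_lt_iff_of_ne (hrev : ∀ a b, π 0 a < π 0 b ↔ π 1 b < π 1 a) {i i' : Fin 2}
    (hi : i ≠ i') (a b : J) : π i a < π i b ↔ π i' b < π i' a := by
  fin_cases i <;> fin_cases i' <;> simp_all

theorem GreedyIdentical.priority_lt (hrev : ∀ a b, π 0 a < π 0 b ↔ π 1 b < π 1 a)
    {f : J → Option (Fin 2)} (hG : GreedyIdentical p π f) {i : Fin 2} {j j' : J}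
    (hj : f j = some i) (hj' : f j' ≠ some i) : π i j < π i j' := by
  induction hG generalizing i j j' with
  | empty => simp at hj
  | step f i₀ j₀ _ hj₀ _ hfirst ih =>
    rcases eq_or_ne j j₀ with rfl | hne
    · obtain rfl : i₀ = i := by simpa using hj
      have hne' : j' ≠ j := by rintro rfl; simp at hj'
      rw [update_of_ne hne'] at hj'
      rcases hfj' : f j' with _ | i'
      · exact hfirst j' hfj' hne'
      · have hi' : i' ≠ i₀ := by rintro rfl; exact hj' hfj'
        exact (inversed_lt_iff_of_ne hrev hi' j' j).1 (ih hfj' (by simp [hj₀]))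
    · rw [update_of_ne hne] at hj
      rcases eq_or_ne j' j₀ with rfl | hne'
      · exact ih hj (by simp [hj₀])
      · exact ih hj (by rwa [update_of_ne hne'] at hj')

theorem GreedyIdentical.prefix_le_load_add (hp : ∀ j, 0 ≤ p j)
    (hrev : ∀ a b, π 0 a < π 0 b ↔ π 1 b < π 1 a)
    {f : J → Option (Fin 2)} (hG : GreedyIdentical p π f) {i i' : Fin 2} (hi : i' ≠ i) {j : J}
    (hj : f j = some i) :
    ∑ x ∈ univ.filter (fun x => f x = some i ∧ π i x ≤ π i j), p x ≤ load p f i' + p j := by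
  induction hG generalizing i j with
  | empty => simp at hj
  | step f i₀ j₀ hf hj₀ hmin _ ih =>
    rcases eq_or_ne j j₀ with rfl | hne
    · obtain rfl : i₀ = i := by simpa using hj
      have hprefix : ∑ x ∈ univ.filter (fun x => update f j (some i₀) x = some i₀ ∧
          π i₀ x ≤ π i₀ j), p x = load p (update f j (some i₀)) i₀ := by
        rw [load]
        congr 1
        ext x
        simp only [mem_filter, mem_univ, true_and]
        refine and_iff_left_of_imp fun hx => ?_
        rcases eq_or_ne x j with rfl | hxj
        · exact le_rfl
        · rw [update_of_ne hxj] at hx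
          exact (hf.priority_lt hrev hx (by simp [hj₀])).le
      rw [hprefix, load_update_self p hj₀, load_update_of_ne p hj₀ hi]
      have hmin' : load p f i₀ ≤ load p f i' := hmin i'
      linarith
    · rw [update_of_ne hne] at hj
      have hprefix : univ.filter (fun x => update f j₀ (some i₀) x = some i ∧ π i x ≤ π i j) =
          univ.filter (fun x => f x = some i ∧ π i x ≤ π i j) := by
        refine filter_congr fun x _ => ?_
        rcases eq_or_ne x j₀ with rfl | hx
        · have hjx := hf.priority_lt hrev hj (show f x ≠ some i by simp [hj₀])
          simp [hj₀, hjx.not_ge]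
        · rw [update_of_ne hx]
      rw [hprefix]
      linarith [ih hi hj, load_le_load_update p hp hj₀ i₀ i']

end Greedy

section Existence

variable {p : J → ℝ} {π : M → J → ℕ}

lemma GreedyIdentical.exists_step [Fintype M] [Nonempty M] (hπ : ∀ i, Injective (π i))
    {f : J → Option M} (hG : GreedyIdentical p π f) {j₀ : J} (hj₀ : f j₀ = none) :
    ∃ i j, f j = none ∧ GreedyIdentical p π (update f j (some i)) := by
  obtain ⟨i, -, hi⟩ := exists_min_image univ (load p f) univ_nonempty
  obtain ⟨j, hj, hfirst⟩ :=
    exists_min_image (univ.filter fun j => f j = none) (π i) ⟨j₀, by simp [hj₀]⟩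
  simp only [mem_filter, mem_univ, true_and] at hj hfirst
  refine ⟨i, j, hj, .step f i j hG hj (fun i' => hi i' (mem_univ _)) fun j' hj' hne => ?_⟩
  exact (hfirst j' hj').lt_of_ne fun h => hne (hπ i h).symm

theorem GreedyIdentical.exists_total [Fintype M] [Nonempty M] (hπ : ∀ i, Injective (π i)) :
    ∃ s : J → M, GreedyIdentical p π (fun j => some (s j)) := by
  suffices h : ∀ n (f : J → Option M), GreedyIdentical p π f → #{j | f j = none} = n →
      ∃ s : J → M, GreedyIdentical p π (fun j => some (s j)) from h _ _ .empty rfl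
  intro n
  induction n with
  | zero =>
    intro f hG hn
    have hsome : ∀ j, (f j).isSome := fun j => by
      rw [card_eq_zero, filter_eq_empty_iff] at hn
      simpa [Option.isSome_iff_ne_none] using hn (mem_univ j)
    exact ⟨fun j => (f j).get (hsome j), by simpa using hG⟩
  | succ n ih =>
    intro f hG hn
    obtain ⟨j₀, hj₀⟩ : ∃ j, f j = none := by
      obtain ⟨j, hj⟩ := card_pos.1 (by rw [hn]; exact n.succ_pos)
      exact ⟨j, by simpa using hj⟩
    obtain ⟨i, j, hj, hstep⟩ := hG.exists_step hπ hj₀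
    refine ih _ hstep ?_
    have hunassigned : univ.filter (fun x => update f j (some i) x = none) =
        (univ.filter fun x => f x = none).erase j := by
      ext x
      rcases eq_or_ne x j with rfl | hx <;> simp [*]
    rw [hunassigned, card_erase_of_mem (by simpa), hn, Nat.add_sub_cancel]

end Existence

theorem GreedyIdentical.isNEC (cls : J → K) {p : J → ℝ} (hp : ∀ j, 0 < p j)
    {π : Fin 2 → J → ℕ} (hπ : ∀ i, Injective (π i))
    (hrev : ∀ a b, π 0 a < π 0 b ↔ π 1 b < π 1 a)
    {s : J → Fin 2} (hG : GreedyIdentical p π (fun j => some (s j))) :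
    IsNEC cls p (fun _ => 1) π s := by
  have hp' : ∀ j, 0 ≤ p j := fun j => (hp j).le
  have hbefore : ∀ {i j j'}, s j = i → s j' ≠ i → π i j < π i j' := fun hj hj' =>
    hG.priority_lt hrev (by simp [hj]) (by simpa using hj')
  have hload : ∀ {i j}, s j ≠ i → Ctime p (fun _ => 1) π s j ≤ load p (some ∘ s) i + p j :=
    fun hj => by
      rw [Ctime, div_one]
      convert hG.prefix_le_load_add hp' hrev (Ne.symm hj) rfl using 3
      · simp
      · rfl
  intro j i
  rcases eq_or_ne i (s j) with rfl | hi
  · exact not_beneficialC_self cls p _ π s j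
  have hdev : Ctime p (fun _ => 1) π (update s j i) j = load p (some ∘ s) i + p j :=
    Ctime_update_self_of_forall_le p π hi.symm fun x hx => (hbefore hx hi.symm).le
  refine not_beneficialC_of_forall_lt cls p _ π (hdev ▸ hload hi.symm) fun j' hne hle => ?_
  rw [hdev]
  by_cases hj' : s j' = i
  · have hlt : π (s j') j' < π (s j') j := hj' ▸ hbefore hj' hi.symm
    rw [Ctime_update_of_lt p π _ i hne hlt]
    have hj'load := Ctime_one_le_load p π hp' s j'
    rw [hj'] at hj'load
    linarith [hp j]
  · have hsame : s j' = s j := by omega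
    have hlt : π (s j) j' < π (s j) j := by
      refine (lt_or_gt_of_ne fun h => hne (hπ _ h)).resolve_right fun hgt => ?_
      linarith [Ctime_add_le_of_lt p π hp' hsame.symm (hsame ▸ hgt), hp j']
    rw [Ctime_update_of_lt p π _ i hne (hsame ▸ hlt)]
    linarith [Ctime_add_le_of_lt p π hp' hsame hlt, hload hi.symm, hp j]

/-- With Inversed-Policies on two identical machines, for any partition of the jobs
into competition classes, every greedy profile is a NE; in particular a NE exists. -/
theorem inversed_policies_classes_NE {J K : Type*} [Fintype J]
    (p : J → ℝ) (hp : ∀ j, 0 < p j)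
    (π : Fin 2 → J → ℕ) (hπ : ∀ i, Function.Injective (π i))
    (hrev : ∀ a b, π 0 a < π 0 b ↔ π 1 b < π 1 a)
    (cls : J → K) :
    (∀ s : J → Fin 2, GreedyIdentical p π (fun j => some (s j)) →
      IsNEC cls p (fun _ => (1:ℝ)) π s) ∧
    (∃ s : J → Fin 2, IsNEC cls p (fun _ => (1:ℝ)) π s) := by
  have hNE : ∀ s : J → Fin 2, GreedyIdentical p π (fun j => some (s j)) →
      IsNEC cls p (fun _ => (1:ℝ)) π s := fun _ hG => hG.isNEC cls hp hπ hrev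
  obtain ⟨s, hs⟩ := GreedyIdentical.exists_total (p := p) hπ
  exact ⟨hNE, s, hNE s hs⟩
end
end
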